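/- Blind background agreement with rewrite-class disagreement: for tokens with t_s ≠ t_b, pairwise distinct t_s', t_{b1}, t_{b2}, rationals slo ≤ shi and blo < bhi, and dimension tag d, the expressions e₁ = Sub (Add (Meas t_s slo shi d) (Meas t_b blo bhi d)) (Meas t_b blo bhi d) and e₂ = Sub (Add (Meas t_s' slo shi d) (Meas t_{b1} blo bhi d)) (Meas t_{b2} blo bhi d) satisfy forgetTokens e₁ = forgetTokens e₂ (hence BlindEncl (forgetTokens e₁) = BlindEncl (forgetTokens e₂)), yet Interchangeable e₁ (Meas t_s slo shi d) holds while OneWayOnly e₂ (Meas t_s' slo shi d) holds. -/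

import Mathlib

abbrev Token := ℕ

inductive Dim where
  | base
deriving DecidableEq

inductive Expr where
  | Exact (q : ℚ) (d : Dim)
  | Meas (t : Token) (lo hi : ℚ) (d : Dim)
  | Add (a b : Expr)
  | Sub (a b : Expr)
  | Mul (a b : Expr)
  | Div (a b : Expr)
  | Neg (a : Expr)

abbrev TokenEnv := Token → ℚ

def TokenConsistent (σ : TokenEnv) : Expr → Prop
  | .Exact _ _ => True
  | .Meas t lo hi _ => lo ≤ σ t ∧ σ t ≤ hi
  | .Add a b => TokenConsistent σ a ∧ TokenConsistent σ b
  | .Sub a b => TokenConsistent σ a ∧ TokenConsistent σ b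
  | .Mul a b => TokenConsistent σ a ∧ TokenConsistent σ b
  | .Div a b => TokenConsistent σ a ∧ TokenConsistent σ b
  | .Neg a => TokenConsistent σ a

def eval (σ : TokenEnv) : Expr → ℚ
  | .Exact q _ => q
  | .Meas t _ _ _ => σ t
  | .Add a b => eval σ a + eval σ b
  | .Sub a b => eval σ a - eval σ b
  | .Mul a b => eval σ a * eval σ b
  | .Div a b => eval σ a / eval σ b
  | .Neg a => - eval σ a

def Encl (e : Expr) : Set ℚ := {v : ℚ | ∃ σ : TokenEnv, TokenConsistent σ e ∧ eval σ e = v}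

def RewritesTo (e e' : Expr) : Prop := Encl e' ⊆ Encl e

def Interchangeable (e e' : Expr) : Prop := Encl e = Encl e'

def OneWayOnly (e e' : Expr) : Prop := RewritesTo e e' ∧ ¬ RewritesTo e' e

inductive BlindExpr where
  | BlindExact (q : ℚ) (d : Dim)
  | BlindMeas (lo hi : ℚ) (d : Dim)
  | Add (a b : BlindExpr)
  | Sub (a b : BlindExpr)
  | Mul (a b : BlindExpr)
  | Div (a b : BlindExpr)
  | Neg (a : BlindExpr)

def forgetTokens : Expr → BlindExpr
  | .Exact q d => .BlindExact q d
  | .Meas _ lo hi d => .BlindMeas lo hi d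
  | .Add a b => .Add (forgetTokens a) (forgetTokens b)
  | .Sub a b => .Sub (forgetTokens a) (forgetTokens b)
  | .Mul a b => .Mul (forgetTokens a) (forgetTokens b)
  | .Div a b => .Div (forgetTokens a) (forgetTokens b)
  | .Neg a => .Neg (forgetTokens a)

def BlindEncl : BlindExpr → Set ℚ
  | .BlindExact q _ => {q}
  | .BlindMeas lo hi _ => {v : ℚ | lo ≤ v ∧ v ≤ hi}
  | .Add a b => {v : ℚ | ∃ x ∈ BlindEncl a, ∃ y ∈ BlindEncl b, x + y = v}
  | .Sub a b => {v : ℚ | ∃ x ∈ BlindEncl a, ∃ y ∈ BlindEncl b, x - y = v}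
  | .Mul a b => {v : ℚ | ∃ x ∈ BlindEncl a, ∃ y ∈ BlindEncl b, x * y = v}
  | .Div a b => {v : ℚ | ∃ x ∈ BlindEncl a, ∃ y ∈ BlindEncl b, x / y = v}
  | .Neg a => {v : ℚ | ∃ x ∈ BlindEncl a, -x = v}

/-!
In `e₁` the background token occurs twice and cancels, so its enclosure is exactly the signal
interval. In `e₂` the two background readings are independent, so its enclosure is the Minkowski
combination `[slo, shi] + [blo, bhi] - [blo, bhi]`, which strictly contains the signal interval once
the background interval is non-degenerate. `forgetTokens` erases precisely the token identities
that tell the two expressions apart.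
-/

open Set Pointwise

theorem encl_meas (t : Token) (lo hi : ℚ) (d : Dim) : Encl (.Meas t lo hi d) = Icc lo hi := by
  ext v
  constructor
  · rintro ⟨σ, hσ, rfl⟩
    exact hσ
  · intro hv
    exact ⟨fun _ => v, hv, rfl⟩

theorem oneWayOnly_iff_encl_ssubset {e e' : Expr} : OneWayOnly e e' ↔ Encl e' ⊂ Encl e :=
  Iff.rfl

theorem encl_sub_add_meas_cancel {ts tb : Token} (hne : ts ≠ tb) {blo bhi : ℚ} (hb : blo ≤ bhi)
    (slo shi : ℚ) (d d' : Dim) :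
    Encl (.Sub (.Add (.Meas ts slo shi d) (.Meas tb blo bhi d')) (.Meas tb blo bhi d')) =
      Icc slo shi := by
  ext v
  constructor
  · rintro ⟨σ, ⟨⟨hs, -⟩, -⟩, rfl⟩
    simp only [eval, add_sub_cancel_right]
    exact hs
  · intro hv
    refine ⟨Function.update (fun _ => blo) ts v, ?_, ?_⟩
    · simp [TokenConsistent, hne.symm, hv.1, hv.2, hb]
    · simp [eval]

theorem encl_sub_add_meas_of_pairwise_ne {ts tb₁ tb₂ : Token}
    (h₁ : ts ≠ tb₁) (h₂ : ts ≠ tb₂) (h₃ : tb₁ ≠ tb₂)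
    (slo shi blo₁ bhi₁ blo₂ bhi₂ : ℚ) (d d₁ d₂ : Dim) :
    Encl (.Sub (.Add (.Meas ts slo shi d) (.Meas tb₁ blo₁ bhi₁ d₁)) (.Meas tb₂ blo₂ bhi₂ d₂)) =
      Icc slo shi + Icc blo₁ bhi₁ - Icc blo₂ bhi₂ := by
  ext v
  constructor
  · rintro ⟨σ, ⟨⟨hs, hb₁⟩, hb₂⟩, rfl⟩
    exact ⟨_, ⟨σ ts, hs, σ tb₁, hb₁, rfl⟩, σ tb₂, hb₂, rfl⟩
  · rintro ⟨_, ⟨s, hs, b₁, hb₁, rfl⟩, b₂, hb₂, rfl⟩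
    refine ⟨fun t => if t = ts then s else if t = tb₁ then b₁ else b₂, ?_, ?_⟩
    · simp [TokenConsistent, h₁.symm, h₂.symm, h₃.symm, hs.1, hs.2, hb₁.1, hb₁.2, hb₂.1, hb₂.2]
    · simp [eval, h₁.symm, h₂.symm, h₃.symm]

theorem Icc_ssubset_Icc_add_Icc_sub_Icc {α : Type*} [AddCommGroup α] [PartialOrder α]
    [IsOrderedAddMonoid α] {a b c d : α} (hab : a ≤ b) (hcd : c < d) :
    Icc a b ⊂ Icc a b + Icc c d - Icc c d := by
  have hc : c ∈ Icc c d := left_mem_Icc.2 hcd.le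
  refine (ssubset_iff_of_subset fun x hx => ?_).2 ⟨b + d - c, ?_, fun hmem => ?_⟩
  · exact ⟨x + c, ⟨x, hx, c, hc, rfl⟩, c, hc, add_sub_cancel_right x c⟩
  · exact ⟨_, ⟨b, right_mem_Icc.2 hab, d, right_mem_Icc.2 hcd.le, rfl⟩, c, hc, rfl⟩
  · have hlt : b < b + d - c := by
      rw [add_sub_assoc]
      exact lt_add_of_pos_right b (sub_pos.2 hcd)
    exact hlt.not_ge hmem.2

theorem blind_background_patterns_agree_but_rewrite_classes_differ
    (ts tb ts' tb₁ tb₂ : Token) (hne : ts ≠ tb)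
    (h₁ : ts' ≠ tb₁) (h₂ : ts' ≠ tb₂) (h₃ : tb₁ ≠ tb₂)
    (slo shi blo bhi : ℚ) (hs : slo ≤ shi) (hb : blo < bhi) (d : Dim) :
    forgetTokens (Expr.Sub (.Add (.Meas ts slo shi d) (.Meas tb blo bhi d)) (.Meas tb blo bhi d))
      = forgetTokens (Expr.Sub (.Add (.Meas ts' slo shi d) (.Meas tb₁ blo bhi d)) (.Meas tb₂ blo bhi d)) ∧
    BlindEncl (forgetTokens (Expr.Sub (.Add (.Meas ts slo shi d) (.Meas tb blo bhi d)) (.Meas tb blo bhi d)))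
      = BlindEncl (forgetTokens (Expr.Sub (.Add (.Meas ts' slo shi d) (.Meas tb₁ blo bhi d)) (.Meas tb₂ blo bhi d))) ∧
    Interchangeable
      (.Sub (.Add (.Meas ts slo shi d) (.Meas tb blo bhi d)) (.Meas tb blo bhi d))
      (.Meas ts slo shi d) ∧
    OneWayOnly
      (.Sub (.Add (.Meas ts' slo shi d) (.Meas tb₁ blo bhi d)) (.Meas tb₂ blo bhi d))
      (.Meas ts' slo shi d) := by
  refine ⟨rfl, rfl, ?_, ?_⟩
  · rw [Interchangeable, encl_sub_add_meas_cancel hne hb.le, encl_meas]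
  · rw [oneWayOnly_iff_encl_ssubset, encl_meas, encl_sub_add_meas_of_pairwise_ne h₁ h₂ h₃]
    exact Icc_ssubset_Icc_add_Icc_sub_Icc hs hb
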